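/- (Theorem 2, 'Informative + sincere equilibrium'.) Fix a voting environment as below, with 0-1 utilities. For each n let Σ†_n be the informative+sincere two-round profile. Then (1) lim_{n→∞} A(Σ†_n) = 1, and (2) there exists a sequence of nonnegative reals ε_n with lim_{n→∞} ε_n = 0 such that for every n, Σ†_n is an ε_n-strong Bayes Nash equilibrium of the n-agent two-round voting game. -/

import Mathlib

noncomputable section
open Classical Finset Filter
open scoped Classical

namespace TwoRoundVoting

/-- Number of friendly agents among `n` agents. -/
def numF (alphaF : ℝ) (n : ℕ) : ℕ := ⌊alphaF * n⌋₊

/-- Number of unfriendly agents among `n` agents. -/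
def numU (alphaU : ℝ) (n : ℕ) : ℕ := ⌊alphaU * n⌋₊

/-- Number of contingent agents among `n` agents. -/
def numC (alphaF alphaU : ℝ) (n : ℕ) : ℕ := n - numF alphaF n - numU alphaU n

/-- A (behavioral) strategy profile in the two-round voting game with `n` agents.
`s1 i m` is the probability that agent `i` votes `A` in the first round upon signal `m`
(`true` = signal `h`, `false` = signal `l`); `s2 i m x` is the probability that agent `i`
votes `A` in the second round upon signal `m` when the announced number of
first-round `A`-votes is `x`. -/
structure TwoRound (n : ℕ) where
  s1 : Fin n → Bool → ℝ
  s2 : Fin n → Bool → ℕ → ℝ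
  s1_nonneg : ∀ i m, 0 ≤ s1 i m
  s1_le_one : ∀ i m, s1 i m ≤ 1
  s2_nonneg : ∀ i m x, 0 ≤ s2 i m x
  s2_le_one : ∀ i m x, s2 i m x ≤ 1

/-- Probability of signal `h` in world state `k` (`true` = `H`, `false` = `L`). -/
def sigP (phH phL : ℝ) (k : Bool) : ℝ := if k then phH else phL

/-- Probability of the signal vector `s` conditioned on world state `k`
(signals are i.i.d. conditioned on the state). -/
def sigWeight (phH phL : ℝ) (k : Bool) {n : ℕ} (s : Fin n → Bool) : ℝ :=
  ∏ i, if s i then sigP phH phL k else 1 - sigP phH phL k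

/-- Number of `A`-votes in a vote vector. -/
def countA {n : ℕ} (v : Fin n → Bool) : ℕ :=
  (Finset.univ.filter fun i => v i = true).card

/-- Probability that alternative `A` wins (i.e. gets strictly more than `n/2`
second-round votes) conditioned on the world state `k`, under profile `σ`. -/
def prAwins (phH phL : ℝ) {n : ℕ} (σ : TwoRound n) (k : Bool) : ℝ :=
  ∑ s : Fin n → Bool, ∑ v1 : Fin n → Bool, ∑ v2 : Fin n → Bool,
    sigWeight phH phL k s *
      (∏ i, if v1 i then σ.s1 i (s i) else 1 - σ.s1 i (s i)) *
      (∏ i, if v2 i then σ.s2 i (s i) (countA v1) else 1 - σ.s2 i (s i) (countA v1)) *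
      (if 2 * countA v2 > n then 1 else 0)

/-- Fidelity of a profile: probability that the informed majority decision is reached. -/
def fidelity (PH PL phH phL : ℝ) {n : ℕ} (σ : TwoRound n) : ℝ :=
  PL * (1 - prAwins phH phL σ false) + PH * prAwins phH phL σ true

/-- Expected 0-1 utility of agent `i`: the first `numF` agents are friendly,
the next `numU` are unfriendly, and the remaining agents are contingent. -/
def util (PH PL phH phL alphaF alphaU : ℝ) {n : ℕ} (σ : TwoRound n) (i : Fin n) : ℝ :=
  if (i : ℕ) < numF alphaF n then
    PH * prAwins phH phL σ true + PL * prAwins phH phL σ false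
  else if (i : ℕ) < numF alphaF n + numU alphaU n then
    PH * (1 - prAwins phH phL σ true) + PL * (1 - prAwins phH phL σ false)
  else
    fidelity PH PL phH phL σ

/-- `σ` is an `ε`-strong Bayes Nash equilibrium: no coalition `D` can deviate so that
every member weakly gains and some member gains more than `ε`. -/
def IsEpsStrongBNE (PH PL phH phL alphaF alphaU : ℝ) {n : ℕ} (σ : TwoRound n) (ε : ℝ) :
    Prop :=
  ¬ ∃ (D : Finset (Fin n)) (σ' : TwoRound n),
      (∀ i, i ∉ D → σ'.s1 i = σ.s1 i ∧ σ'.s2 i = σ.s2 i) ∧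
      (∀ i ∈ D, util PH PL phH phL alphaF alphaU σ i ≤
        util PH PL phH phL alphaF alphaU σ' i) ∧
      (∃ i ∈ D, util PH PL phH phL alphaF alphaU σ i + ε <
        util PH PL phH phL alphaF alphaU σ' i)


/-- The sincere second-round condition: upon observing `x` first-round `A`-votes,
with `a := x − n_F` inferred `h`-signals among the `n_C` contingent agents, vote `A` iff
`P_H·P_hH^a·(1−P_hH)^(n_C−a) ≥ P_L·P_hL^a·(1−P_hL)^(n_C−a)`, i.e. iff the Bayesian
posterior probability of world state `H` is at least `1/2`.  Powers are real powers. -/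
def SincereCond (PH PL phH phL : ℝ) (nF nC : ℕ) (x : ℕ) : Prop :=
  PH * phH ^ ((x : ℝ) - (nF : ℝ)) * (1 - phH) ^ ((nC : ℝ) - ((x : ℝ) - (nF : ℝ))) ≥
    PL * phL ^ ((x : ℝ) - (nF : ℝ)) * (1 - phL) ^ ((nC : ℝ) - ((x : ℝ) - (nF : ℝ)))

/-- The "informative + sincere" strategy profile `Σ†_n`: friendly agents always vote `A`,
unfriendly agents always vote `R`, and contingent agents vote their signal in the first
round and vote sincerely (according to the Bayesian posterior) in the second round. -/
def sincereProfile (PH PL phH phL alphaF alphaU : ℝ) (n : ℕ) : TwoRound n where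
  s1 := fun i m =>
    if (i : ℕ) < numF alphaF n then 1
    else if (i : ℕ) < numF alphaF n + numU alphaU n then 0
    else if m then 1 else 0
  s2 := fun i _m x =>
    if (i : ℕ) < numF alphaF n then 1
    else if (i : ℕ) < numF alphaF n + numU alphaU n then 0
    else if SincereCond PH PL phH phL (numF alphaF n) (numC alphaF alphaU n) x then 1 else 0
  s1_nonneg := by intro i m; (try dsimp only); split_ifs <;> norm_num
  s1_le_one := by intro i m; (try dsimp only); split_ifs <;> norm_num
  s2_nonneg := by intro i m x; (try dsimp only); split_ifs <;> norm_num
  s2_le_one := by intro i m x; (try dsimp only); split_ifs <;> norm_num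


/-! ### Auxiliary machinery -/

/-- generic product weight -/
def Wt {n : ℕ} (p : Fin n → ℝ) (v : Fin n → Bool) : ℝ := ∏ i, if v i then p i else 1 - p i

lemma sum_prod_bool {n : ℕ} (h : Fin n → Bool → ℝ) :
    ∑ s : Fin n → Bool, ∏ i, h i (s i) = ∏ i, (h i true + h i false) := by
  have := Finset.prod_univ_sum (fun i : Fin n => (Finset.univ : Finset Bool)) h
  rw [Fintype.piFinset_univ] at this
  simp [Fintype.sum_bool] at this
  rw [this]

lemma Wt_nonneg {n : ℕ} {p : Fin n → ℝ} (h0 : ∀ i, 0 ≤ p i) (h1 : ∀ i, p i ≤ 1)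
    (v : Fin n → Bool) : 0 ≤ Wt p v := by
  apply Finset.prod_nonneg; intro i _
  by_cases hv : v i <;> simp [hv] <;> [exact h0 i; linarith [h1 i]]

lemma sum_Wt {n : ℕ} (p : Fin n → ℝ) : ∑ v : Fin n → Bool, Wt p v = 1 := by
  unfold Wt
  rw [sum_prod_bool (fun i b => if b then p i else 1 - p i)]
  simp

lemma sum_det {n : ℕ} (p : Fin n → ℝ) (hp : ∀ i, p i = 0 ∨ p i = 1)
    (F : (Fin n → Bool) → ℝ) :
    ∑ v : Fin n → Bool, Wt p v * F v = F (fun i => decide (p i = 1)) := by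
  rw [Finset.sum_eq_single (fun i => decide (p i = 1))]
  · have : Wt p (fun i => decide (p i = 1)) = 1 := by
      unfold Wt
      apply Finset.prod_eq_one; intro i _
      rcases hp i with h | h <;> simp [h]
    rw [this, one_mul]
  · intro v _ hv
    have : Wt p v = 0 := by
      have : ∃ i, v i ≠ decide (p i = 1) := by
        by_contra hc
        push_neg at hc
        exact hv (funext hc)
      obtain ⟨i, hi⟩ := this
      unfold Wt
      apply Finset.prod_eq_zero (Finset.mem_univ i)
      rcases hp i with h | h
      · have : v i = true := by
          cases hvi : v i
          · simp [hvi, h] at hi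
          · rfl
        simp [this, h]
      · have : v i = false := by
          cases hvi : v i
          · rfl
          · simp [hvi, h] at hi
        simp [this, h]
    rw [this, zero_mul]
  · simp

lemma Wt_forced_true {n : ℕ} {p : Fin n → ℝ} {v : Fin n → Bool}
    (h : Wt p v ≠ 0) {i : Fin n} (hp : p i = 1) : v i = true := by
  unfold Wt at h
  rw [Finset.prod_ne_zero_iff] at h
  have := h i (Finset.mem_univ i)
  cases hvi : v i
  · rw [hvi] at this; simp [hp] at this
  · rfl

lemma Wt_forced_false {n : ℕ} {p : Fin n → ℝ} {v : Fin n → Bool}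
    (h : Wt p v ≠ 0) {i : Fin n} (hp : p i = 0) : v i = false := by
  unfold Wt at h
  rw [Finset.prod_ne_zero_iff] at h
  have := h i (Finset.mem_univ i)
  cases hvi : v i
  · rfl
  · rw [hvi] at this; simp [hp] at this

lemma card_filter_lt (n m : ℕ) (h : m ≤ n) :
    (Finset.univ.filter fun i : Fin n => (i : ℕ) < m).card = m := by
  rw [Finset.card_filter]
  rw [Fin.sum_univ_eq_sum_range (fun k => if k < m then 1 else 0)]
  rw [← Finset.sum_filter]
  have : (Finset.range n).filter (fun i => i < m) = Finset.range m := by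
    ext k; simp [Finset.mem_range]; omega
  simp [this]

/-- number of `true`s of `s` inside `C` -/
def cnt {n : ℕ} (C : Finset (Fin n)) (s : Fin n → Bool) : ℕ :=
  (C.filter fun i => s i = true).card

lemma cov_eq {n : ℕ} (p : ℝ) (i j : Fin n) :
    ∑ s : Fin n → Bool, Wt (fun _ => p) s *
        (((if s i then (1:ℝ) else 0) - p) * ((if s j then (1:ℝ) else 0) - p))
      = if i = j then p * (1 - p) else 0 := by
  have key : ∀ s : Fin n → Bool,
      Wt (fun _ => p) s * (((if s i then (1:ℝ) else 0) - p) * ((if s j then (1:ℝ) else 0) - p))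
      = ∏ i', ((if s i' then p else 1 - p) *
          ((if i' = i then (if s i' then (1:ℝ) else 0) - p else 1) *
           (if i' = j then (if s i' then (1:ℝ) else 0) - p else 1))) := by
    intro s
    rw [Finset.prod_mul_distrib, Finset.prod_mul_distrib]
    rw [Finset.prod_ite_eq' Finset.univ i (fun i' => (if s i' then (1:ℝ) else 0) - p)]
    rw [Finset.prod_ite_eq' Finset.univ j (fun i' => (if s i' then (1:ℝ) else 0) - p)]
    simp [Wt]
  simp only [key]
  rw [sum_prod_bool (fun i' b => (if b then p else 1 - p) *
          ((if i' = i then (if b then (1:ℝ) else 0) - p else 1) *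
           (if i' = j then (if b then (1:ℝ) else 0) - p else 1)))]
  by_cases hij : i = j
  · subst hij
    simp only [if_pos rfl]
    rw [Finset.prod_eq_single i]
    · simp; ring
    · intro b _ hb
      simp [hb]
    · simp
  · rw [if_neg hij]
    apply Finset.prod_eq_zero (Finset.mem_univ i)
    simp [hij]; ring

lemma variance_eq {n : ℕ} (p : ℝ) (C : Finset (Fin n)) :
    ∑ s : Fin n → Bool, Wt (fun _ => p) s * ((cnt C s : ℝ) - C.card * p)^2
      = C.card * (p * (1 - p)) := by
  have hc : ∀ s : Fin n → Bool, ((cnt C s : ℝ) - C.card * p)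
      = ∑ i ∈ C, ((if s i then (1:ℝ) else 0) - p) := by
    intro s
    rw [Finset.sum_sub_distrib]
    have : (cnt C s : ℝ) = ∑ i ∈ C, (if s i then (1:ℝ) else 0) := by
      unfold cnt
      rw [Finset.card_filter]
      push_cast
      exact Finset.sum_congr rfl (by intro i _; by_cases h : s i <;> simp [h])
    rw [this]
    simp [mul_comm]
  have expand : ∀ s : Fin n → Bool, Wt (fun _ => p) s * ((cnt C s : ℝ) - C.card * p)^2
      = ∑ i ∈ C, ∑ j ∈ C, Wt (fun _ => p) s *
          (((if s i then (1:ℝ) else 0) - p) * ((if s j then (1:ℝ) else 0) - p)) := by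
    intro s
    rw [hc s, sq, Finset.sum_mul_sum]
    rw [Finset.mul_sum]
    exact Finset.sum_congr rfl (fun i _ => by rw [Finset.mul_sum])
  simp only [expand]
  rw [Finset.sum_comm]
  have : ∀ i ∈ C, (∑ s : Fin n → Bool, ∑ j ∈ C, Wt (fun _ => p) s *
      (((if s i then (1:ℝ) else 0) - p) * ((if s j then (1:ℝ) else 0) - p)))
      = p * (1-p) := by
    intro i hi
    rw [Finset.sum_comm]
    have : ∀ j ∈ C, (∑ s : Fin n → Bool, Wt (fun _ => p) s *
        (((if s i then (1:ℝ) else 0) - p) * ((if s j then (1:ℝ) else 0) - p)))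
        = if i = j then p * (1-p) else 0 := fun j _ => cov_eq p i j
    rw [Finset.sum_congr rfl this]
    simp [Finset.sum_ite_eq C i (fun _ => p * (1-p)), hi]
  rw [Finset.sum_congr rfl this, Finset.sum_const, nsmul_eq_mul]

lemma chebyshev {n : ℕ} (p c : ℝ) (C : Finset (Fin n)) (E : (Fin n → Bool) → Prop)
    (hp0 : 0 ≤ p) (hp1 : p ≤ 1) (hc : 0 < c)
    (hE : ∀ s, E s → c ≤ |(cnt C s : ℝ) - C.card * p|) :
    ∑ s : Fin n → Bool, Wt (fun _ => p) s * (if E s then (1:ℝ) else 0)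
      ≤ C.card * (p * (1 - p)) / c^2 := by
  have h1 : ∀ s : Fin n → Bool, Wt (fun _ => p) s * (if E s then (1:ℝ) else 0)
      ≤ Wt (fun _ => p) s * (((cnt C s : ℝ) - C.card * p)^2 / c^2) := by
    intro s
    apply mul_le_mul_of_nonneg_left _ (Wt_nonneg (fun _ => hp0) (fun _ => hp1) s)
    by_cases hEs : E s
    · rw [if_pos hEs]
      rw [le_div_iff₀ (by positivity), one_mul]
      have := hE s hEs
      calc c^2 ≤ |(cnt C s : ℝ) - C.card * p|^2 := by
                  apply pow_le_pow_left₀ hc.le this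
        _ = ((cnt C s : ℝ) - C.card * p)^2 := sq_abs _
    · rw [if_neg hEs]
      positivity
  calc ∑ s : Fin n → Bool, Wt (fun _ => p) s * (if E s then (1:ℝ) else 0)
      ≤ ∑ s : Fin n → Bool, Wt (fun _ => p) s * (((cnt C s : ℝ) - C.card * p)^2 / c^2) :=
        Finset.sum_le_sum (fun s _ => h1 s)
    _ = (∑ s : Fin n → Bool, Wt (fun _ => p) s * ((cnt C s : ℝ) - C.card * p)^2) / c^2 := by
        rw [Finset.sum_div]
        exact Finset.sum_congr rfl (fun s _ => by ring)
    _ = C.card * (p * (1 - p)) / c^2 := by rw [variance_eq]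


lemma sincere_iff {PH PL phH phL : ℝ} (hPH : 0 < PH) (hPL : 0 < PL)
    (hphL0 : 0 < phL) (hph : phL < phH) (hphH1 : phH < 1) (nF nC x : ℕ) :
    SincereCond PH PL phH phL nF nC x ↔
      Real.log PL - Real.log PH ≤
        ((x : ℝ) - nF) * (Real.log phH - Real.log phL) +
        ((nC : ℝ) - ((x : ℝ) - nF)) * (Real.log (1 - phH) - Real.log (1 - phL)) := by
  have hphH0 : 0 < phH := lt_trans hphL0 hph
  have h1H : 0 < 1 - phH := by linarith
  have h1L : 0 < 1 - phL := by linarith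
  set a : ℝ := (x : ℝ) - nF
  set b : ℝ := (nC : ℝ) - a
  have hposL : 0 < PL * phL ^ a * (1 - phL) ^ b := by
    exact mul_pos (mul_pos hPL (Real.rpow_pos_of_pos hphL0 a)) (Real.rpow_pos_of_pos h1L b)
  have hposH : 0 < PH * phH ^ a * (1 - phH) ^ b := by
    exact mul_pos (mul_pos hPH (Real.rpow_pos_of_pos hphH0 a)) (Real.rpow_pos_of_pos h1H b)
  unfold SincereCond
  rw [ge_iff_le, ← Real.log_le_log_iff hposL hposH]
  rw [Real.log_mul (by positivity) (by positivity), Real.log_mul (by positivity) (by positivity),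
      Real.log_mul (by positivity) (by positivity), Real.log_mul (by positivity) (by positivity),
      Real.log_rpow hphL0, Real.log_rpow hphH0, Real.log_rpow h1L, Real.log_rpow h1H]
  constructor <;> intro h <;> nlinarith [h]

lemma sincere_mono {PH PL phH phL : ℝ} (hPH : 0 < PH) (hPL : 0 < PL)
    (hphL0 : 0 < phL) (hph : phL < phH) (hphH1 : phH < 1) (nF nC : ℕ) {x y : ℕ}
    (hxy : x ≤ y) (hx : SincereCond PH PL phH phL nF nC x) :
    SincereCond PH PL phH phL nF nC y := by
  rw [sincere_iff hPH hPL hphL0 hph hphH1] at hx ⊢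
  have hphH0 : 0 < phH := lt_trans hphL0 hph
  have hL1 : Real.log phL < Real.log phH := Real.log_lt_log hphL0 hph
  have hL2 : Real.log (1 - phH) < Real.log (1 - phL) := Real.log_lt_log (by linarith) (by linarith)
  have hxy' : (x : ℝ) ≤ y := Nat.cast_le.mpr hxy
  nlinarith [hx, mul_nonneg (sub_nonneg.mpr hxy')
    (by linarith : (0:ℝ) ≤ (Real.log phH - Real.log phL) - (Real.log (1 - phH) - Real.log (1 - phL)))]

lemma kl_pos {phH phL : ℝ} (hphL0 : 0 < phL) (hph : phL < phH) (hphH1 : phH < 1) :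
    0 < phH * (Real.log phH - Real.log phL) +
        (1 - phH) * (Real.log (1 - phH) - Real.log (1 - phL)) := by
  have hphH0 : 0 < phH := lt_trans hphL0 hph
  have h1H : 0 < 1 - phH := by linarith
  have h1L : 0 < 1 - phL := by linarith
  have k1 : Real.log (phL / phH) < phL / phH - 1 := by
    apply Real.log_lt_sub_one_of_pos (by positivity)
    intro h
    have := (div_eq_one_iff_eq (ne_of_gt hphH0)).mp h
    linarith
  have k2 : Real.log ((1 - phL) / (1 - phH)) < (1 - phL) / (1 - phH) - 1 := by
    apply Real.log_lt_sub_one_of_pos (by positivity)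
    intro h
    have := (div_eq_one_iff_eq (ne_of_gt h1H)).mp h
    linarith
  rw [Real.log_div (ne_of_gt hphL0) (ne_of_gt hphH0)] at k1
  rw [Real.log_div (ne_of_gt h1L) (ne_of_gt h1H)] at k2
  have e1 : phL / phH - 1 = (phL - phH) / phH := by field_simp
  have e2 : (1 - phL) / (1 - phH) - 1 = (phH - phL) / (1 - phH) := by field_simp; ring
  rw [e1] at k1; rw [e2] at k2
  have m1 : phH * (Real.log phL - Real.log phH) < phL - phH := by
    have := mul_lt_mul_of_pos_left k1 hphH0
    rwa [mul_div_cancel₀ _ (ne_of_gt hphH0)] at this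
  have m2 : (1 - phH) * (Real.log (1 - phL) - Real.log (1 - phH)) < phH - phL := by
    have := mul_lt_mul_of_pos_left k2 h1H
    rwa [mul_div_cancel₀ _ (ne_of_gt h1H)] at this
  nlinarith

lemma kl_neg {phH phL : ℝ} (hphL0 : 0 < phL) (hph : phL < phH) (hphH1 : phH < 1) :
    phL * (Real.log phH - Real.log phL) +
      (1 - phL) * (Real.log (1 - phH) - Real.log (1 - phL)) < 0 := by
  have hphH0 : 0 < phH := lt_trans hphL0 hph
  have h1H : 0 < 1 - phH := by linarith
  have h1L : 0 < 1 - phL := by linarith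
  have k1 : Real.log (phH / phL) < phH / phL - 1 := by
    apply Real.log_lt_sub_one_of_pos (by positivity)
    intro h
    have := (div_eq_one_iff_eq (ne_of_gt hphL0)).mp h
    linarith
  have k2 : Real.log ((1 - phH) / (1 - phL)) < (1 - phH) / (1 - phL) - 1 := by
    apply Real.log_lt_sub_one_of_pos (by positivity)
    intro h
    have := (div_eq_one_iff_eq (ne_of_gt h1L)).mp h
    linarith
  rw [Real.log_div (ne_of_gt hphH0) (ne_of_gt hphL0)] at k1
  rw [Real.log_div (ne_of_gt h1H) (ne_of_gt h1L)] at k2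
  have e1 : phH / phL - 1 = (phH - phL) / phL := by field_simp
  have e2 : (1 - phH) / (1 - phL) - 1 = (phL - phH) / (1 - phL) := by field_simp; ring
  rw [e1] at k1; rw [e2] at k2
  have m1 : phL * (Real.log phH - Real.log phL) < phH - phL := by
    have := mul_lt_mul_of_pos_left k1 hphL0
    rwa [mul_div_cancel₀ _ (ne_of_gt hphL0)] at this
  have m2 : (1 - phL) * (Real.log (1 - phH) - Real.log (1 - phL)) < phL - phH := by
    have := mul_lt_mul_of_pos_left k2 h1L
    rwa [mul_div_cancel₀ _ (ne_of_gt h1L)] at this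
  linarith


/-! ### Structural lemmas -/

def Fset (alphaF : ℝ) (n : ℕ) : Finset (Fin n) :=
  Finset.univ.filter fun i => (i : ℕ) < numF alphaF n

def Cset (alphaF alphaU : ℝ) (n : ℕ) : Finset (Fin n) :=
  Finset.univ.filter fun i => ¬ (i : ℕ) < numF alphaF n + numU alphaU n

lemma mem_Fset {alphaF : ℝ} {n : ℕ} (i : Fin n) :
    i ∈ Fset alphaF n ↔ (i : ℕ) < numF alphaF n := by simp [Fset]

lemma mem_Cset {alphaF alphaU : ℝ} {n : ℕ} (i : Fin n) :
    i ∈ Cset alphaF alphaU n ↔ ¬ (i : ℕ) < numF alphaF n + numU alphaU n := by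
  simp only [Cset, Finset.mem_filter, Finset.mem_univ, true_and]

lemma numF_le {alphaF : ℝ} (h0 : 0 ≤ alphaF) (h : alphaF < 1 / 2) (n : ℕ) :
    2 * numF alphaF n ≤ n := by
  have hle : (numF alphaF n : ℝ) ≤ alphaF * n := Nat.floor_le (by positivity)
  rcases Nat.eq_zero_or_pos n with hn | hn
  · subst hn; simp [numF]
  · have hn' : (1 : ℝ) ≤ n := by exact_mod_cast hn
    have : (2 * numF alphaF n : ℝ) < n := by push_cast; nlinarith
    have : 2 * numF alphaF n < n := by exact_mod_cast this
    omega

lemma numU_lt {alphaU : ℝ} (h0 : 0 ≤ alphaU) (h : alphaU < 1 / 2) {n : ℕ} (hn : 1 ≤ n) :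
    2 * numU alphaU n < n := by
  have hle : (numU alphaU n : ℝ) ≤ alphaU * n := Nat.floor_le (by positivity)
  have hn' : (1 : ℝ) ≤ n := by exact_mod_cast hn
  have : (2 * numU alphaU n : ℝ) < n := by push_cast; nlinarith
  exact_mod_cast this

lemma numFU_le {alphaF alphaU : ℝ} (hF0 : 0 ≤ alphaF) (hU0 : 0 ≤ alphaU)
    (hsum : alphaF + alphaU < 1) (n : ℕ) :
    numF alphaF n + numU alphaU n ≤ n := by
  have h1 : (numF alphaF n : ℝ) ≤ alphaF * n := Nat.floor_le (by positivity)
  have h2 : (numU alphaU n : ℝ) ≤ alphaU * n := Nat.floor_le (by positivity)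
  have hn0 : (0 : ℝ) ≤ n := Nat.cast_nonneg n
  have : (numF alphaF n + numU alphaU n : ℝ) ≤ n := by push_cast; nlinarith
  exact_mod_cast this

lemma card_Fset {alphaF : ℝ} (h0 : 0 ≤ alphaF) (h : alphaF < 1 / 2) (n : ℕ) :
    (Fset alphaF n).card = numF alphaF n :=
  card_filter_lt n _ (by have := numF_le h0 h n; omega)

lemma card_Cset {alphaF alphaU : ℝ} (hF0 : 0 ≤ alphaF) (hU0 : 0 ≤ alphaU)
    (hsum : alphaF + alphaU < 1) (n : ℕ) :
    (Cset alphaF alphaU n).card = numC alphaF alphaU n := by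
  have h1 := Finset.card_filter_add_card_filter_not
    (s := (Finset.univ : Finset (Fin n)))
    (p := fun i : Fin n => (i : ℕ) < numF alphaF n + numU alphaU n)
  have h2 := card_filter_lt n (numF alphaF n + numU alphaU n) (numFU_le hF0 hU0 hsum n)
  have h3 : (Finset.univ : Finset (Fin n)).card = n := by simp
  have h4 := numFU_le hF0 hU0 hsum n
  unfold Cset numC
  omega

lemma disj_FC {alphaF alphaU : ℝ} (n : ℕ) (t : Finset (Fin n)) (ht : t ⊆ Cset alphaF alphaU n) :
    Disjoint (Fset alphaF n) t := by
  rw [Finset.disjoint_left]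
  intro i hiF hit
  have h1 : (i : ℕ) < numF alphaF n := by simpa [Fset] using hiF
  have h2 : ¬ (i : ℕ) < numF alphaF n + numU alphaU n := by simpa [Cset] using ht hit
  omega

lemma card_FC {alphaF alphaU : ℝ} (hF0 : 0 ≤ alphaF) (hF : alphaF < 1 / 2) (n : ℕ)
    (sp : Fin n → Bool) :
    (Fset alphaF n ∪ (Cset alphaF alphaU n).filter (fun i => sp i = true)).card
      = numF alphaF n + cnt (Cset alphaF alphaU n) sp := by
  rw [Finset.card_union_of_disjoint (disj_FC n _ (Finset.filter_subset _ _)),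
    card_Fset hF0 hF n]
  rfl

lemma card_FCfull {alphaF alphaU : ℝ} (hF0 : 0 ≤ alphaF) (hF : alphaF < 1 / 2)
    (hU0 : 0 ≤ alphaU) (hsum : alphaF + alphaU < 1) (n : ℕ) :
    (Fset alphaF n ∪ Cset alphaF alphaU n).card
      = numF alphaF n + numC alphaF alphaU n := by
  rw [Finset.card_union_of_disjoint (disj_FC n _ (le_refl _)), card_Fset hF0 hF n,
    card_Cset hF0 hU0 hsum n]

lemma sigWeight_eq (phH phL : ℝ) (k : Bool) {n : ℕ} (s : Fin n → Bool) :
    sigWeight phH phL k s = Wt (fun _ => sigP phH phL k) s := rfl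

lemma sigP_mem {phH phL : ℝ} (hphL0 : 0 < phL) (hph : phL < phH) (hphH1 : phH < 1) (k : Bool) :
    0 ≤ sigP phH phL k ∧ sigP phH phL k ≤ 1 := by
  cases k <;> constructor <;> simp [sigP] <;> linarith

lemma prAwins_eq (phH phL : ℝ) {n : ℕ} (σ : TwoRound n) (k : Bool) :
    prAwins phH phL σ k = ∑ s : Fin n → Bool, sigWeight phH phL k s *
      ∑ v1 : Fin n → Bool, Wt (fun i => σ.s1 i (s i)) v1 *
        ∑ v2 : Fin n → Bool, Wt (fun i => σ.s2 i (s i) (countA v1)) v2 *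
          (if 2 * countA v2 > n then (1:ℝ) else 0) := by
  unfold prAwins Wt
  refine Finset.sum_congr rfl (fun s _ => ?_)
  rw [Finset.mul_sum]
  refine Finset.sum_congr rfl (fun v1 _ => ?_)
  rw [Finset.mul_sum, Finset.mul_sum]
  refine Finset.sum_congr rfl (fun v2 _ => ?_)
  ring

lemma sum_Wt_mul_nonneg {n : ℕ} (q : Fin n → ℝ) (hq0 : ∀ i, 0 ≤ q i) (hq1 : ∀ i, q i ≤ 1)
    (g : (Fin n → Bool) → ℝ) (hg0 : ∀ v, 0 ≤ g v) :
    0 ≤ ∑ v : Fin n → Bool, Wt q v * g v :=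
  Finset.sum_nonneg (fun v _ => mul_nonneg (Wt_nonneg hq0 hq1 v) (hg0 v))

lemma sum_Wt_mul_le_one {n : ℕ} (q : Fin n → ℝ) (hq0 : ∀ i, 0 ≤ q i) (hq1 : ∀ i, q i ≤ 1)
    (g : (Fin n → Bool) → ℝ) (hg1 : ∀ v, g v ≤ 1) :
    ∑ v : Fin n → Bool, Wt q v * g v ≤ 1 := by
  calc ∑ v : Fin n → Bool, Wt q v * g v
      ≤ ∑ v : Fin n → Bool, Wt q v * 1 :=
        Finset.sum_le_sum (fun v _ =>
          mul_le_mul_of_nonneg_left (hg1 v) (Wt_nonneg hq0 hq1 v))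
    _ = 1 := by simp only [mul_one]; exact sum_Wt q

lemma inner2_nonneg {n : ℕ} (σ : TwoRound n) (s : Fin n → Bool) (v1 : Fin n → Bool) :
    0 ≤ ∑ v2 : Fin n → Bool, Wt (fun i => σ.s2 i (s i) (countA v1)) v2 *
      (if 2 * countA v2 > n then (1:ℝ) else 0) :=
  sum_Wt_mul_nonneg _ (fun i => σ.s2_nonneg i _ _) (fun i => σ.s2_le_one i _ _) _
    (fun v => by split_ifs <;> norm_num)

lemma inner2_le_one {n : ℕ} (σ : TwoRound n) (s : Fin n → Bool) (v1 : Fin n → Bool) :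
    ∑ v2 : Fin n → Bool, Wt (fun i => σ.s2 i (s i) (countA v1)) v2 *
      (if 2 * countA v2 > n then (1:ℝ) else 0) ≤ 1 :=
  sum_Wt_mul_le_one _ (fun i => σ.s2_nonneg i _ _) (fun i => σ.s2_le_one i _ _) _
    (fun v => by split_ifs <;> norm_num)

lemma inner1_nonneg {n : ℕ} (σ : TwoRound n) (s : Fin n → Bool) :
    0 ≤ ∑ v1 : Fin n → Bool, Wt (fun i => σ.s1 i (s i)) v1 *
      ∑ v2 : Fin n → Bool, Wt (fun i => σ.s2 i (s i) (countA v1)) v2 *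
        (if 2 * countA v2 > n then (1:ℝ) else 0) :=
  sum_Wt_mul_nonneg _ (fun i => σ.s1_nonneg i _) (fun i => σ.s1_le_one i _) _
    (fun v1 => inner2_nonneg σ s v1)

lemma inner1_le_one {n : ℕ} (σ : TwoRound n) (s : Fin n → Bool) :
    ∑ v1 : Fin n → Bool, Wt (fun i => σ.s1 i (s i)) v1 *
      ∑ v2 : Fin n → Bool, Wt (fun i => σ.s2 i (s i) (countA v1)) v2 *
        (if 2 * countA v2 > n then (1:ℝ) else 0) ≤ 1 :=
  sum_Wt_mul_le_one _ (fun i => σ.s1_nonneg i _) (fun i => σ.s1_le_one i _) _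
    (fun v1 => inner2_le_one σ s v1)

lemma prAwins_nonneg {phH phL : ℝ} (hphL0 : 0 < phL) (hph : phL < phH) (hphH1 : phH < 1)
    {n : ℕ} (σ : TwoRound n) (k : Bool) : 0 ≤ prAwins phH phL σ k := by
  rw [prAwins_eq]
  apply Finset.sum_nonneg
  intro s _
  apply mul_nonneg _ (inner1_nonneg σ s)
  rw [sigWeight_eq]
  exact Wt_nonneg (fun _ => (sigP_mem hphL0 hph hphH1 k).1)
    (fun _ => (sigP_mem hphL0 hph hphH1 k).2) s

lemma prAwins_le_one {phH phL : ℝ} (hphL0 : 0 < phL) (hph : phL < phH) (hphH1 : phH < 1)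
    {n : ℕ} (σ : TwoRound n) (k : Bool) : prAwins phH phL σ k ≤ 1 := by
  rw [prAwins_eq]
  calc ∑ s : Fin n → Bool, sigWeight phH phL k s *
      (∑ v1 : Fin n → Bool, Wt (fun i => σ.s1 i (s i)) v1 *
        ∑ v2 : Fin n → Bool, Wt (fun i => σ.s2 i (s i) (countA v1)) v2 *
          (if 2 * countA v2 > n then (1:ℝ) else 0))
      ≤ ∑ s : Fin n → Bool, Wt (fun _ => sigP phH phL k) s * 1 := by
        apply Finset.sum_le_sum
        intro s _
        rw [sigWeight_eq]
        exact mul_le_mul_of_nonneg_left (inner1_le_one σ s)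
          (Wt_nonneg (fun _ => (sigP_mem hphL0 hph hphH1 k).1)
            (fun _ => (sigP_mem hphL0 hph hphH1 k).2) s)
    _ = 1 := by simp only [mul_one]; exact sum_Wt _

lemma prAwins_le_G {phH phL : ℝ} (hphL0 : 0 < phL) (hph : phL < phH) (hphH1 : phH < 1)
    {n : ℕ} (σ : TwoRound n) (k : Bool) (G : (Fin n → Bool) → Prop)
    (h : ∀ s v1 v2, Wt (fun i => σ.s1 i (s i)) v1 ≠ 0 →
        Wt (fun i => σ.s2 i (s i) (countA v1)) v2 ≠ 0 → 2 * countA v2 > n → G s) :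
    prAwins phH phL σ k ≤
      ∑ s : Fin n → Bool, sigWeight phH phL k s * (if G s then (1:ℝ) else 0) := by
  rw [prAwins_eq]
  apply Finset.sum_le_sum
  intro s _
  apply mul_le_mul_of_nonneg_left _ (by
    rw [sigWeight_eq]
    exact Wt_nonneg (fun _ => (sigP_mem hphL0 hph hphH1 k).1)
      (fun _ => (sigP_mem hphL0 hph hphH1 k).2) s)
  by_cases hG : G s
  · rw [if_pos hG]; exact inner1_le_one σ s
  · rw [if_neg hG]
    apply le_of_eq
    apply Finset.sum_eq_zero
    intro v1 _
    by_cases h1 : Wt (fun i => σ.s1 i (s i)) v1 = 0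
    · rw [h1, zero_mul]
    · have : (∑ v2 : Fin n → Bool, Wt (fun i => σ.s2 i (s i) (countA v1)) v2 *
          (if 2 * countA v2 > n then (1:ℝ) else 0)) = 0 := by
        apply Finset.sum_eq_zero
        intro v2 _
        by_cases h2 : Wt (fun i => σ.s2 i (s i) (countA v1)) v2 = 0
        · rw [h2, zero_mul]
        · have hnw : ¬ (2 * countA v2 > n) := fun hw => hG (h s v1 v2 h1 h2 hw)
          rw [if_neg hnw, mul_zero]
      rw [this, mul_zero]

lemma prAwins_ge_G {phH phL : ℝ} (hphL0 : 0 < phL) (hph : phL < phH) (hphH1 : phH < 1)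
    {n : ℕ} (σ : TwoRound n) (k : Bool) (G : (Fin n → Bool) → Prop)
    (h : ∀ s, G s → ∀ v1, Wt (fun i => σ.s1 i (s i)) v1 ≠ 0 →
        ∀ v2, Wt (fun i => σ.s2 i (s i) (countA v1)) v2 ≠ 0 → 2 * countA v2 > n) :
    ∑ s : Fin n → Bool, sigWeight phH phL k s * (if G s then (1:ℝ) else 0)
      ≤ prAwins phH phL σ k := by
  rw [prAwins_eq]
  apply Finset.sum_le_sum
  intro s _
  apply mul_le_mul_of_nonneg_left _ (by
    rw [sigWeight_eq]
    exact Wt_nonneg (fun _ => (sigP_mem hphL0 hph hphH1 k).1)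
      (fun _ => (sigP_mem hphL0 hph hphH1 k).2) s)
  by_cases hG : G s
  · rw [if_pos hG]
    have key : ∀ v1 ∈ (Finset.univ : Finset (Fin n → Bool)),
        Wt (fun i => σ.s1 i (s i)) v1 *
          (∑ v2 : Fin n → Bool, Wt (fun i => σ.s2 i (s i) (countA v1)) v2 *
            (if 2 * countA v2 > n then (1:ℝ) else 0))
        = Wt (fun i => σ.s1 i (s i)) v1 * 1 := by
      intro v1 _
      by_cases h1 : Wt (fun i => σ.s1 i (s i)) v1 = 0
      · rw [h1, zero_mul, zero_mul]
      · congr 1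
        have : ∀ v2 ∈ (Finset.univ : Finset (Fin n → Bool)),
            Wt (fun i => σ.s2 i (s i) (countA v1)) v2 *
              (if 2 * countA v2 > n then (1:ℝ) else 0)
            = Wt (fun i => σ.s2 i (s i) (countA v1)) v2 := by
          intro v2 _
          by_cases h2 : Wt (fun i => σ.s2 i (s i) (countA v1)) v2 = 0
          · rw [h2, zero_mul]
          · rw [if_pos (h s hG v1 h1 v2 h2), mul_one]
        rw [Finset.sum_congr rfl this, sum_Wt]
    rw [Finset.sum_congr rfl key]
    have : ∑ v1 : Fin n → Bool, Wt (fun i => σ.s1 i (s i)) v1 * 1 = 1 := by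
      simp only [mul_one]; exact sum_Wt _
    rw [this]
  · rw [if_neg hG]
    exact inner1_nonneg σ s


lemma sincere_formula (PH PL phH phL alphaF alphaU : ℝ)
    (hPH : 0 < PH) (hPL : 0 < PL)
    (hphL0 : 0 < phL) (hph : phL < phH) (hphH1 : phH < 1)
    (hF0 : 0 ≤ alphaF) (hF : alphaF < 1 / 2) (hU0 : 0 ≤ alphaU) (hU : alphaU < 1 / 2)
    (hsum : alphaF + alphaU < 1)
    {n : ℕ} (hn : 1 ≤ n) (k : Bool) :
    prAwins phH phL (sincereProfile PH PL phH phL alphaF alphaU n) k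
      = ∑ s : Fin n → Bool, sigWeight phH phL k s *
          (if SincereCond PH PL phH phL (numF alphaF n) (numC alphaF alphaU n)
              (numF alphaF n + cnt (Cset alphaF alphaU n) s) then (1:ℝ) else 0) := by
  rw [prAwins_eq]
  refine Finset.sum_congr rfl (fun s _ => ?_)
  congr 1
  set σ := sincereProfile PH PL phH phL alphaF alphaU n with hσ
  have hp1 : ∀ i : Fin n, (fun i => σ.s1 i (s i)) i = 0 ∨ (fun i => σ.s1 i (s i)) i = 1 := by
    intro i
    simp only [hσ, sincereProfile]
    split_ifs <;> simp
  rw [sum_det _ hp1]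
  have hcount1 : countA (fun i => decide ((fun i => σ.s1 i (s i)) i = 1))
      = numF alphaF n + cnt (Cset alphaF alphaU n) s := by
    unfold countA
    have hset : (Finset.univ.filter fun i : Fin n =>
          (fun i => decide ((fun i => σ.s1 i (s i)) i = 1)) i = true)
        = Fset alphaF n ∪ (Cset alphaF alphaU n).filter (fun i => s i = true) := by
      ext i
      simp only [Finset.mem_filter, Finset.mem_union, mem_Fset, mem_Cset,
        decide_eq_true_eq, hσ, sincereProfile]
      by_cases h1 : (i : ℕ) < numF alphaF n
      · simp [h1]
      · by_cases h2 : (i : ℕ) < numF alphaF n + numU alphaU n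
        · simp [h1, h2]
        · cases hsi : s i <;> simp [h1, h2, hsi]
    rw [hset, card_FC hF0 hF n s]
  rw [hcount1]
  have hp2 : ∀ i : Fin n,
      (fun i => σ.s2 i (s i) (numF alphaF n + cnt (Cset alphaF alphaU n) s)) i = 0 ∨
      (fun i => σ.s2 i (s i) (numF alphaF n + cnt (Cset alphaF alphaU n) s)) i = 1 := by
    intro i
    simp only [hσ, sincereProfile]
    split_ifs <;> simp
  rw [sum_det _ hp2]
  by_cases hSin : SincereCond PH PL phH phL (numF alphaF n) (numC alphaF alphaU n)
      (numF alphaF n + cnt (Cset alphaF alphaU n) s)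
  · rw [if_pos hSin]
    have hcount2 : countA (fun i => decide ((fun i =>
          σ.s2 i (s i) (numF alphaF n + cnt (Cset alphaF alphaU n) s)) i = 1))
        = numF alphaF n + numC alphaF alphaU n := by
      unfold countA
      have hset : (Finset.univ.filter fun i : Fin n =>
            (fun i => decide ((fun i =>
              σ.s2 i (s i) (numF alphaF n + cnt (Cset alphaF alphaU n) s)) i = 1)) i = true)
          = Fset alphaF n ∪ Cset alphaF alphaU n := by
        ext i
        simp only [Finset.mem_union, mem_Fset, mem_Cset,
          decide_eq_true_eq, hσ, sincereProfile]
        by_cases h1 : (i : ℕ) < numF alphaF n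
        · simp [h1]
        · by_cases h2 : (i : ℕ) < numF alphaF n + numU alphaU n
          · simp [h1, h2]
          · simp [h1, h2, hSin]; omega
      rw [hset, card_FCfull hF0 hF hU0 hsum n]
    rw [hcount2, if_pos]
    have h4 := numFU_le hF0 hU0 hsum n
    have h5 := numU_lt hU0 hU hn
    unfold numC
    omega
  · rw [if_neg hSin]
    have hcount2 : countA (fun i => decide ((fun i =>
          σ.s2 i (s i) (numF alphaF n + cnt (Cset alphaF alphaU n) s)) i = 1))
        = numF alphaF n := by
      unfold countA
      have hset : (Finset.univ.filter fun i : Fin n =>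
            (fun i => decide ((fun i =>
              σ.s2 i (s i) (numF alphaF n + cnt (Cset alphaF alphaU n) s)) i = 1)) i = true)
          = Fset alphaF n := by
        ext i
        simp only [mem_Fset, decide_eq_true_eq, hσ, sincereProfile]
        by_cases h1 : (i : ℕ) < numF alphaF n
        · simp [h1]
        · by_cases h2 : (i : ℕ) < numF alphaF n + numU alphaU n
          · simp [h1, h2]
          · simp [h1, h2, hSin]
      rw [hset, card_Fset hF0 hF n]
    rw [hcount2, if_neg]
    have := numF_le hF0 hF n
    omega

lemma friendly_deviation (PH PL phH phL alphaF alphaU : ℝ)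
    (hPH : 0 < PH) (hPL : 0 < PL)
    (hphL0 : 0 < phL) (hph : phL < phH) (hphH1 : phH < 1)
    (hF0 : 0 ≤ alphaF) (hF : alphaF < 1 / 2) (hU0 : 0 ≤ alphaU) (hU : alphaU < 1 / 2)
    (hsum : alphaF + alphaU < 1)
    {n : ℕ} (hn : 1 ≤ n) (σ' : TwoRound n) (D : Finset (Fin n))
    (hD : ∀ i ∈ D, (i : ℕ) < numF alphaF n)
    (hag : ∀ i, i ∉ D → σ'.s1 i = (sincereProfile PH PL phH phL alphaF alphaU n).s1 i ∧
        σ'.s2 i = (sincereProfile PH PL phH phL alphaF alphaU n).s2 i) (k : Bool) :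
    prAwins phH phL σ' k ≤ prAwins phH phL (sincereProfile PH PL phH phL alphaF alphaU n) k := by
  rw [sincere_formula PH PL phH phL alphaF alphaU hPH hPL hphL0 hph hphH1 hF0 hF hU0 hU hsum hn k]
  apply prAwins_le_G hphL0 hph hphH1
  intro s v1 v2 h1 h2 hwin
  by_contra hG
  have hsub1 : Finset.univ.filter (fun i => v1 i = true)
      ⊆ Fset alphaF n ∪ (Cset alphaF alphaU n).filter (fun i => s i = true) := by
    intro i hi
    simp only [Finset.mem_filter, Finset.mem_univ, true_and] at hi
    by_cases hf : (i : ℕ) < numF alphaF n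
    · exact Finset.mem_union_left _ ((mem_Fset i).mpr hf)
    · have hiD : i ∉ D := fun hmem => hf (hD i hmem)
      have hs1 : σ'.s1 i = (sincereProfile PH PL phH phL alphaF alphaU n).s1 i := (hag i hiD).1
      by_cases hu : (i : ℕ) < numF alphaF n + numU alphaU n
      · have hz : (fun i => σ'.s1 i (s i)) i = 0 := by
          simp only [hs1, sincereProfile]; simp [hf, hu]
        have := Wt_forced_false h1 hz
        rw [hi] at this; exact absurd this (by simp)
      · cases hsi : s i
        · have hz : (fun i => σ'.s1 i (s i)) i = 0 := by
            simp only [hs1, sincereProfile]; simp [hf, hu, hsi]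
          have := Wt_forced_false h1 hz
          rw [hi] at this; exact absurd this (by simp)
        · exact Finset.mem_union_right _
            (Finset.mem_filter.mpr ⟨(mem_Cset i).mpr hu, hsi⟩)
  have hle : countA v1 ≤ numF alphaF n + cnt (Cset alphaF alphaU n) s := by
    calc countA v1 ≤ (Fset alphaF n ∪ (Cset alphaF alphaU n).filter (fun i => s i = true)).card :=
          Finset.card_le_card hsub1
      _ = numF alphaF n + cnt (Cset alphaF alphaU n) s := card_FC hF0 hF n s
  have hnotSin : ¬ SincereCond PH PL phH phL (numF alphaF n) (numC alphaF alphaU n)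
      (countA v1) := fun hs => hG (sincere_mono hPH hPL hphL0 hph hphH1 _ _ hle hs)
  have hsub2 : Finset.univ.filter (fun i => v2 i = true) ⊆ Fset alphaF n := by
    intro i hi
    simp only [Finset.mem_filter, Finset.mem_univ, true_and] at hi
    by_contra hf'
    have hf : ¬ (i : ℕ) < numF alphaF n := fun hc => hf' ((mem_Fset i).mpr hc)
    have hiD : i ∉ D := fun hmem => hf (hD i hmem)
    have hs2 : σ'.s2 i = (sincereProfile PH PL phH phL alphaF alphaU n).s2 i := (hag i hiD).2
    have hz : (fun i => σ'.s2 i (s i) (countA v1)) i = 0 := by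
      by_cases hu : (i : ℕ) < numF alphaF n + numU alphaU n
      · simp only [hs2, sincereProfile]; simp [hf, hu]
      · simp only [hs2, sincereProfile]; simp [hf, hu, hnotSin]
    have := Wt_forced_false h2 hz
    rw [hi] at this; exact absurd this (by simp)
  have hc2 : countA v2 ≤ numF alphaF n := by
    calc countA v2 ≤ (Fset alphaF n).card := Finset.card_le_card hsub2
      _ = numF alphaF n := card_Fset hF0 hF n
  have := numF_le hF0 hF n
  omega

lemma unfriendly_deviation (PH PL phH phL alphaF alphaU : ℝ)
    (hPH : 0 < PH) (hPL : 0 < PL)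
    (hphL0 : 0 < phL) (hph : phL < phH) (hphH1 : phH < 1)
    (hF0 : 0 ≤ alphaF) (hF : alphaF < 1 / 2) (hU0 : 0 ≤ alphaU) (hU : alphaU < 1 / 2)
    (hsum : alphaF + alphaU < 1)
    {n : ℕ} (hn : 1 ≤ n) (σ' : TwoRound n) (D : Finset (Fin n))
    (hD : ∀ i ∈ D, ¬ (i : ℕ) < numF alphaF n ∧ (i : ℕ) < numF alphaF n + numU alphaU n)
    (hag : ∀ i, i ∉ D → σ'.s1 i = (sincereProfile PH PL phH phL alphaF alphaU n).s1 i ∧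
        σ'.s2 i = (sincereProfile PH PL phH phL alphaF alphaU n).s2 i) (k : Bool) :
    prAwins phH phL (sincereProfile PH PL phH phL alphaF alphaU n) k ≤ prAwins phH phL σ' k := by
  rw [sincere_formula PH PL phH phL alphaF alphaU hPH hPL hphL0 hph hphH1 hF0 hF hU0 hU hsum hn k]
  apply prAwins_ge_G hphL0 hph hphH1
  intro s hG v1 h1 v2 h2
  have hsub1 : Fset alphaF n ∪ (Cset alphaF alphaU n).filter (fun i => s i = true)
      ⊆ Finset.univ.filter (fun i => v1 i = true) := by
    intro i hi
    simp only [Finset.mem_filter, Finset.mem_univ, true_and]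
    rcases Finset.mem_union.mp hi with hiF | hiC
    · have hf : (i : ℕ) < numF alphaF n := (mem_Fset i).mp hiF
      have hiD : i ∉ D := fun hmem => (hD i hmem).1 hf
      have ho : (fun i => σ'.s1 i (s i)) i = 1 := by
        simp only [(hag i hiD).1, sincereProfile]; simp [hf]
      exact Wt_forced_true h1 ho
    · obtain ⟨hiC', hsi⟩ := Finset.mem_filter.mp hiC
      have hu : ¬ (i : ℕ) < numF alphaF n + numU alphaU n := (mem_Cset i).mp hiC'
      have hf : ¬ (i : ℕ) < numF alphaF n := fun h => hu (by omega)
      have hiD : i ∉ D := fun hmem => hu (hD i hmem).2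
      have ho : (fun i => σ'.s1 i (s i)) i = 1 := by
        simp only [(hag i hiD).1, sincereProfile]
        simp [hf, hu, hsi]
      exact Wt_forced_true h1 ho
  have hge : numF alphaF n + cnt (Cset alphaF alphaU n) s ≤ countA v1 := by
    calc numF alphaF n + cnt (Cset alphaF alphaU n) s
        = (Fset alphaF n ∪ (Cset alphaF alphaU n).filter (fun i => s i = true)).card :=
          (card_FC hF0 hF n s).symm
      _ ≤ countA v1 := Finset.card_le_card hsub1
  have hSin : SincereCond PH PL phH phL (numF alphaF n) (numC alphaF alphaU n) (countA v1) :=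
    sincere_mono hPH hPL hphL0 hph hphH1 _ _ hge hG
  have hsub2 : Fset alphaF n ∪ Cset alphaF alphaU n
      ⊆ Finset.univ.filter (fun i => v2 i = true) := by
    intro i hi
    simp only [Finset.mem_filter, Finset.mem_univ, true_and]
    rcases Finset.mem_union.mp hi with hiF | hiC
    · have hf : (i : ℕ) < numF alphaF n := (mem_Fset i).mp hiF
      have hiD : i ∉ D := fun hmem => (hD i hmem).1 hf
      have ho : (fun i => σ'.s2 i (s i) (countA v1)) i = 1 := by
        simp only [(hag i hiD).2, sincereProfile]; simp [hf]
      exact Wt_forced_true h2 ho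
    · have hu : ¬ (i : ℕ) < numF alphaF n + numU alphaU n := (mem_Cset i).mp hiC
      have hf : ¬ (i : ℕ) < numF alphaF n := fun h => hu (by omega)
      have hiD : i ∉ D := fun hmem => hu (hD i hmem).2
      have ho : (fun i => σ'.s2 i (s i) (countA v1)) i = 1 := by
        simp only [(hag i hiD).2, sincereProfile]
        simp [hf, hu, hSin]
      exact Wt_forced_true h2 ho
  have hge2 : numF alphaF n + numC alphaF alphaU n ≤ countA v2 := by
    calc numF alphaF n + numC alphaF alphaU n
        = (Fset alphaF n ∪ Cset alphaF alphaU n).card := (card_FCfull hF0 hF hU0 hsum n).symm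
      _ ≤ countA v2 := Finset.card_le_card hsub2
  have h4 := numFU_le hF0 hU0 hsum n
  have h5 := numU_lt hU0 hU hn
  unfold numC at hge2
  omega


lemma fid_le_one {PH PL phH phL : ℝ} (hPH : 0 < PH) (hPL : 0 < PL) (hPsum : PH + PL = 1)
    (hphL0 : 0 < phL) (hph : phL < phH) (hphH1 : phH < 1) {n : ℕ} (σ : TwoRound n) :
    fidelity PH PL phH phL σ ≤ 1 := by
  unfold fidelity
  have h1 := prAwins_nonneg hphL0 hph hphH1 σ false
  have h2 := prAwins_le_one hphL0 hph hphH1 σ true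
  have h3 : PL * (1 - prAwins phH phL σ false) ≤ PL * 1 :=
    mul_le_mul_of_nonneg_left (by linarith) hPL.le
  have h4 : PH * prAwins phH phL σ true ≤ PH * 1 :=
    mul_le_mul_of_nonneg_left h2 hPH.le
  linarith

set_option maxHeartbeats 3200000 in
lemma fidelity_tendsto (PH PL phH phL alphaF alphaU : ℝ)
    (hPH : 0 < PH) (hPL : 0 < PL) (hPsum : PH + PL = 1)
    (hphL0 : 0 < phL) (hph : phL < phH) (hphH1 : phH < 1)
    (hF0 : 0 ≤ alphaF) (hF : alphaF < 1 / 2) (hU0 : 0 ≤ alphaU) (hU : alphaU < 1 / 2)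
    (hsum : alphaF + alphaU < 1) :
    Tendsto (fun n => fidelity PH PL phH phL (sincereProfile PH PL phH phL alphaF alphaU n))
      atTop (nhds 1) := by
  have hphH0 : 0 < phH := lt_trans hphL0 hph
  have h1H : 0 < 1 - phH := by linarith
  have h1L : 0 < 1 - phL := by linarith
  obtain ⟨L1, hL1_def⟩ : ∃ x : ℝ, x = Real.log phH - Real.log phL := ⟨_, rfl⟩
  obtain ⟨L2, hL2_def⟩ : ∃ x : ℝ, x = Real.log (1 - phH) - Real.log (1 - phL) := ⟨_, rfl⟩
  obtain ⟨B, hB_def⟩ : ∃ x : ℝ, x = Real.log PL - Real.log PH := ⟨_, rfl⟩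
  have hL1pos : 0 < L1 := by
    rw [hL1_def]; have := Real.log_lt_log hphL0 hph; linarith
  have hL2neg : L2 < 0 := by
    rw [hL2_def]; have := Real.log_lt_log h1H (by linarith : 1 - phH < 1 - phL); linarith
  have hL1L2 : 0 < L1 - L2 := by linarith
  obtain ⟨DH, hDH_def⟩ : ∃ x : ℝ, x = phH * L1 + (1 - phH) * L2 := ⟨_, rfl⟩
  obtain ⟨DL, hDL_def⟩ : ∃ x : ℝ, x = phL * L1 + (1 - phL) * L2 := ⟨_, rfl⟩
  have hDHpos : 0 < DH := by
    rw [hDH_def, hL1_def, hL2_def]; exact kl_pos hphL0 hph hphH1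
  have hDLneg : DL < 0 := by
    rw [hDL_def, hL1_def, hL2_def]; exact kl_neg hphL0 hph hphH1
  obtain ⟨dH, hdH_def⟩ : ∃ x : ℝ, x = DH / (2 * (L1 - L2)) := ⟨_, rfl⟩
  obtain ⟨dL, hdL_def⟩ : ∃ x : ℝ, x = -DL / (2 * (L1 - L2)) := ⟨_, rfl⟩
  have hne : (L1 - L2) ≠ 0 := ne_of_gt hL1L2
  have hdHpos : 0 < dH := by rw [hdH_def]; exact div_pos hDHpos (by linarith)
  have hdLpos : 0 < dL := by rw [hdL_def]; exact div_pos (by linarith) (by linarith)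
  have hdHeq : dH * (L1 - L2) = DH / 2 := by
    rw [hdH_def]; field_simp
  have hdLeq : dL * (L1 - L2) = -DL / 2 := by
    rw [hdL_def]; field_simp
  obtain ⟨K, hK_def⟩ : ∃ x : ℝ,
      x = PL * (phL * (1 - phL)) / dL ^ 2 + PH * (phH * (1 - phH)) / dH ^ 2 := ⟨_, rfl⟩
  -- numC tends to infinity
  have hαC : (0:ℝ) < 1 - alphaF - alphaU := by linarith
  have hnC_low : ∀ n : ℕ, (1 - alphaF - alphaU) * n ≤ (numC alphaF alphaU n : ℝ) := by
    intro n
    have hfu := numFU_le hF0 hU0 hsum n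
    have hC_eq : numC alphaF alphaU n = n - (numF alphaF n + numU alphaU n) := by
      unfold numC; omega
    rw [hC_eq, Nat.cast_sub hfu]
    have h1 : (numF alphaF n : ℝ) ≤ alphaF * n := Nat.floor_le (by positivity)
    have h2 : (numU alphaU n : ℝ) ≤ alphaU * n := Nat.floor_le (by positivity)
    push_cast
    nlinarith
  have hnC : Tendsto (fun n => (numC alphaF alphaU n : ℝ)) atTop atTop :=
    tendsto_atTop_mono hnC_low
      (Tendsto.const_mul_atTop hαC tendsto_natCast_atTop_atTop)
  -- eventual conditions
  have e1 : ∀ᶠ n : ℕ in atTop, B ≤ (numC alphaF alphaU n : ℝ) * (DH / 2) :=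
    (hnC.atTop_mul_const (by linarith : (0:ℝ) < DH / 2)).eventually_ge_atTop B
  have e2 : ∀ᶠ n : ℕ in atTop, -B < (numC alphaF alphaU n : ℝ) * (-DL / 2) :=
    (hnC.atTop_mul_const (by linarith : (0:ℝ) < -DL / 2)).eventually_gt_atTop (-B)
  have e3 : ∀ᶠ n : ℕ in atTop, 1 ≤ n := eventually_ge_atTop 1
  have e4 : ∀ᶠ n : ℕ in atTop, (1:ℝ) ≤ (numC alphaF alphaU n : ℝ) :=
    hnC.eventually_ge_atTop 1
  -- main eventual bound
  have hub : ∀ᶠ n : ℕ in atTop,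
      1 - fidelity PH PL phH phL (sincereProfile PH PL phH phL alphaF alphaU n)
        ≤ K / (numC alphaF alphaU n : ℝ) := by
    filter_upwards [e1, e2, e3, e4] with n he1 he2 he3 he4
    obtain ⟨nC, hnC_def⟩ : ∃ m : ℕ, numC alphaF alphaU n = m := ⟨_, rfl⟩
    rw [hnC_def] at he1 he2 he4 ⊢
    have hnCpos : (0:ℝ) < (nC:ℝ) := by linarith
    have hcard : (Cset alphaF alphaU n).card = nC := by
      rw [card_Cset hF0 hU0 hsum n, hnC_def]
    have hsigH : (fun _ : Fin n => sigP phH phL true) = (fun _ => phH) := by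
      funext i; simp [sigP]
    have hsigL : (fun _ : Fin n => sigP phH phL false) = (fun _ => phL) := by
      funext i; simp [sigP]
    have hformT := sincere_formula PH PL phH phL alphaF alphaU hPH hPL hphL0 hph hphH1
      hF0 hF hU0 hU hsum he3 true
    have hformF := sincere_formula PH PL phH phL alphaF alphaU hPH hPL hphL0 hph hphH1
      hF0 hF hU0 hU hsum he3 false
    -- state H bound
    have hcast : ∀ s : Fin n → Bool,
        ((numF alphaF n + cnt (Cset alphaF alphaU n) s : ℕ) : ℝ) - (numF alphaF n : ℝ)
          = (cnt (Cset alphaF alphaU n) s : ℝ) := by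
      intro s; push_cast; ring
    have hlinear : ∀ s : Fin n → Bool,
        (SincereCond PH PL phH phL (numF alphaF n) nC
          (numF alphaF n + cnt (Cset alphaF alphaU n) s) ↔
        B ≤ (cnt (Cset alphaF alphaU n) s : ℝ) * (L1 - L2) + (nC : ℝ) * L2) := by
      intro s
      rw [sincere_iff hPH hPL hphL0 hph hphH1, hcast s, ← hL1_def, ← hL2_def, ← hB_def]
      have hring : (cnt (Cset alphaF alphaU n) s : ℝ) * L1 +
          ((nC : ℝ) - (cnt (Cset alphaF alphaU n) s : ℝ)) * L2
          = (cnt (Cset alphaF alphaU n) s : ℝ) * (L1 - L2) + (nC : ℝ) * L2 := by ring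
      rw [hring]
    have hET : ∀ s : Fin n → Bool,
        (¬ SincereCond PH PL phH phL (numF alphaF n) nC
          (numF alphaF n + cnt (Cset alphaF alphaU n) s)) →
        dH * (nC:ℝ) ≤ |(cnt (Cset alphaF alphaU n) s : ℝ) - (Cset alphaF alphaU n).card * phH| := by
      intro s hns
      by_contra hlt
      push_neg at hlt
      rw [hcard] at hlt
      apply hns
      rw [hlinear s]
      have habs := abs_lt.mp hlt
      have hcl : (nC:ℝ) * phH - dH * nC ≤ (cnt (Cset alphaF alphaU n) s : ℝ) := by linarith
      have h2' : ((nC:ℝ) * phH - dH * nC) * (L1 - L2)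
          ≤ (cnt (Cset alphaF alphaU n) s : ℝ) * (L1 - L2) :=
        mul_le_mul_of_nonneg_right hcl hL1L2.le
      have h3' : ((nC:ℝ) * phH - dH * nC) * (L1 - L2) + (nC:ℝ) * L2
          = (nC:ℝ) * DH - (nC:ℝ) * (dH * (L1 - L2)) := by
        rw [hDH_def]; ring
      rw [hdHeq] at h3'
      have he1' : B ≤ (nC:ℝ) * (DH / 2) := he1
      have h4' : (nC:ℝ) * DH - (nC:ℝ) * (DH / 2) = (nC:ℝ) * (DH / 2) := by ring
      linarith
    have hEF : ∀ s : Fin n → Bool,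
        (SincereCond PH PL phH phL (numF alphaF n) nC
          (numF alphaF n + cnt (Cset alphaF alphaU n) s)) →
        dL * (nC:ℝ) ≤ |(cnt (Cset alphaF alphaU n) s : ℝ) - (Cset alphaF alphaU n).card * phL| := by
      intro s hsin
      by_contra hlt
      push_neg at hlt
      rw [hcard] at hlt
      have habs := abs_lt.mp hlt
      have hcl : (cnt (Cset alphaF alphaU n) s : ℝ) ≤ (nC:ℝ) * phL + dL * nC := by linarith
      have h2' : (cnt (Cset alphaF alphaU n) s : ℝ) * (L1 - L2)
          ≤ ((nC:ℝ) * phL + dL * nC) * (L1 - L2) :=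
        mul_le_mul_of_nonneg_right hcl hL1L2.le
      have h3' : ((nC:ℝ) * phL + dL * nC) * (L1 - L2) + (nC:ℝ) * L2
          = (nC:ℝ) * DL + (nC:ℝ) * (dL * (L1 - L2)) := by
        rw [hDL_def]; ring
      rw [hdLeq] at h3'
      have he2' : -B < (nC:ℝ) * (-DL / 2) := he2
      have h4' : (nC:ℝ) * DL + (nC:ℝ) * (-DL / 2) = -((nC:ℝ) * (-DL / 2)) := by ring
      rw [hlinear s] at hsin
      linarith
    -- chebyshev bounds
    have hchebT := chebyshev phH (dH * (nC:ℝ)) (Cset alphaF alphaU n)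
      (fun s => ¬ SincereCond PH PL phH phL (numF alphaF n) nC
        (numF alphaF n + cnt (Cset alphaF alphaU n) s))
      hphH0.le hphH1.le (by positivity) hET
    have hchebF := chebyshev phL (dL * (nC:ℝ)) (Cset alphaF alphaU n)
      (fun s => SincereCond PH PL phH phL (numF alphaF n) nC
        (numF alphaF n + cnt (Cset alphaF alphaU n) s))
      hphL0.le (by linarith : phL ≤ 1) (by positivity) hEF
    rw [hcard] at hchebT hchebF
    -- identify prAwins with the indicator sums
    have hformT' : prAwins phH phL (sincereProfile PH PL phH phL alphaF alphaU n) true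
        = ∑ s : Fin n → Bool, Wt (fun _ => phH) s *
            (if SincereCond PH PL phH phL (numF alphaF n) nC
              (numF alphaF n + cnt (Cset alphaF alphaU n) s) then (1:ℝ) else 0) := by
      rw [hformT]
      refine Finset.sum_congr rfl (fun s _ => ?_)
      rw [sigWeight_eq, hsigH, hnC_def]
    have hformF' : prAwins phH phL (sincereProfile PH PL phH phL alphaF alphaU n) false
        = ∑ s : Fin n → Bool, Wt (fun _ => phL) s *
            (if SincereCond PH PL phH phL (numF alphaF n) nC
              (numF alphaF n + cnt (Cset alphaF alphaU n) s) then (1:ℝ) else 0) := by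
      rw [hformF]
      refine Finset.sum_congr rfl (fun s _ => ?_)
      rw [sigWeight_eq, hsigL, hnC_def]
    -- complement sum for state H
    have hcompl : prAwins phH phL (sincereProfile PH PL phH phL alphaF alphaU n) true
        + ∑ s : Fin n → Bool, Wt (fun _ => phH) s *
            (if ¬ SincereCond PH PL phH phL (numF alphaF n) nC
              (numF alphaF n + cnt (Cset alphaF alphaU n) s) then (1:ℝ) else 0) = 1 := by
      rw [hformT', ← Finset.sum_add_distrib]
      have : ∀ s ∈ (Finset.univ : Finset (Fin n → Bool)),
          Wt (fun _ => phH) s * (if SincereCond PH PL phH phL (numF alphaF n) nC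
              (numF alphaF n + cnt (Cset alphaF alphaU n) s) then (1:ℝ) else 0)
          + Wt (fun _ => phH) s * (if ¬ SincereCond PH PL phH phL (numF alphaF n) nC
              (numF alphaF n + cnt (Cset alphaF alphaU n) s) then (1:ℝ) else 0)
          = Wt (fun _ => phH) s := by
        intro s _
        by_cases h : SincereCond PH PL phH phL (numF alphaF n) nC
          (numF alphaF n + cnt (Cset alphaF alphaU n) s) <;> simp [h]
      rw [Finset.sum_congr rfl this, sum_Wt]
    have hboundT : 1 - prAwins phH phL (sincereProfile PH PL phH phL alphaF alphaU n) true
        ≤ phH * (1 - phH) / dH ^ 2 / (nC:ℝ) := by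
      have heq : 1 - prAwins phH phL (sincereProfile PH PL phH phL alphaF alphaU n) true
          = ∑ s : Fin n → Bool, Wt (fun _ => phH) s *
            (if ¬ SincereCond PH PL phH phL (numF alphaF n) nC
              (numF alphaF n + cnt (Cset alphaF alphaU n) s) then (1:ℝ) else 0) := by
        linarith [hcompl]
      rw [heq]
      calc _ ≤ (nC:ℝ) * (phH * (1 - phH)) / (dH * (nC:ℝ))^2 := by convert hchebT using 4 with s
        _ = phH * (1 - phH) / dH ^ 2 / (nC:ℝ) := by
            field_simp
    have hboundF : prAwins phH phL (sincereProfile PH PL phH phL alphaF alphaU n) false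
        ≤ phL * (1 - phL) / dL ^ 2 / (nC:ℝ) := by
      rw [hformF']
      calc _ ≤ (nC:ℝ) * (phL * (1 - phL)) / (dL * (nC:ℝ))^2 := by convert hchebF using 4 with s
        _ = phL * (1 - phL) / dL ^ 2 / (nC:ℝ) := by
            field_simp
    -- combine
    have hfid_eq : fidelity PH PL phH phL (sincereProfile PH PL phH phL alphaF alphaU n)
        = PL * (1 - prAwins phH phL (sincereProfile PH PL phH phL alphaF alphaU n) false)
          + PH * prAwins phH phL (sincereProfile PH PL phH phL alphaF alphaU n) true := rfl
    have hKeq : K / (nC:ℝ) = PL * (phL * (1 - phL) / dL ^ 2 / (nC:ℝ))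
        + PH * (phH * (1 - phH) / dH ^ 2 / (nC:ℝ)) := by
      rw [hK_def]
      field_simp
    rw [hfid_eq, hKeq]
    have m1 : PL * (prAwins phH phL (sincereProfile PH PL phH phL alphaF alphaU n) false)
        ≤ PL * (phL * (1 - phL) / dL ^ 2 / (nC:ℝ)) :=
      mul_le_mul_of_nonneg_left hboundF hPL.le
    have m2 : PH * (1 - prAwins phH phL (sincereProfile PH PL phH phL alphaF alphaU n) true)
        ≤ PH * (phH * (1 - phH) / dH ^ 2 / (nC:ℝ)) :=
      mul_le_mul_of_nonneg_left hboundT hPH.le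
    ring_nf at m1 m2 ⊢
    linarith [m1, m2]
  -- squeeze
  have hlb : ∀ᶠ n : ℕ in atTop,
      0 ≤ 1 - fidelity PH PL phH phL (sincereProfile PH PL phH phL alphaF alphaU n) := by
    filter_upwards with n
    have := fid_le_one hPH hPL hPsum hphL0 hph hphH1
      (sincereProfile PH PL phH phL alphaF alphaU n)
    linarith
  have hKtend : Tendsto (fun n : ℕ => K / (numC alphaF alphaU n : ℝ)) atTop (nhds 0) :=
    Tendsto.div_atTop tendsto_const_nhds hnC
  have hsq : Tendsto (fun n : ℕ =>
      1 - fidelity PH PL phH phL (sincereProfile PH PL phH phL alphaF alphaU n))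
      atTop (nhds 0) := squeeze_zero' hlb hub hKtend
  have heq : (fun n : ℕ => fidelity PH PL phH phL (sincereProfile PH PL phH phL alphaF alphaU n))
      = fun n : ℕ => 1 - (1 - fidelity PH PL phH phL (sincereProfile PH PL phH phL alphaF alphaU n)) := by
    funext n; ring
  rw [heq]
  have := (tendsto_const_nhds (x := (1:ℝ)) (f := (atTop : Filter ℕ))).sub hsq
  simpa using this

set_option maxHeartbeats 3200000

/-- **Theorem 2 ("Informative + sincere" equilibrium).** In any voting environment with
0-1 utilities, the informative+sincere profiles `Σ†_n` have fidelity converging to `1`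
and are `ε n`-strong Bayes Nash equilibria for some nonnegative `ε n → 0`. -/
theorem informative_sincere_equilibrium
    (PH PL phH phL alphaF alphaU : ℝ)
    (hPH : 0 < PH) (hPL : 0 < PL) (hPsum : PH + PL = 1)
    (hphL0 : 0 < phL) (hph : phL < phH) (hphH1 : phH < 1)
    (halphaF0 : 0 ≤ alphaF) (halphaF : alphaF < 1 / 2)
    (halphaU0 : 0 ≤ alphaU) (halphaU : alphaU < 1 / 2)
    (halphaC : alphaF + alphaU < 1) :
    Tendsto (fun n => fidelity PH PL phH phL (sincereProfile PH PL phH phL alphaF alphaU n))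
      atTop (nhds 1) ∧
    ∃ ε : ℕ → ℝ, (∀ n, 0 ≤ ε n) ∧ Tendsto ε atTop (nhds 0) ∧
      ∀ n, IsEpsStrongBNE PH PL phH phL alphaF alphaU
        (sincereProfile PH PL phH phL alphaF alphaU n) (ε n) := by
  have hfid := fidelity_tendsto PH PL phH phL alphaF alphaU hPH hPL hPsum hphL0 hph hphH1
    halphaF0 halphaF halphaU0 halphaU halphaC
  refine ⟨hfid, fun n => 2 * (1 - fidelity PH PL phH phL
      (sincereProfile PH PL phH phL alphaF alphaU n)), fun n => ?_, ?_, fun n => ?_⟩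
  · show (0:ℝ) ≤ 2 * (1 - fidelity PH PL phH phL (sincereProfile PH PL phH phL alphaF alphaU n))
    have := fid_le_one hPH hPL hPsum hphL0 hph hphH1
      (sincereProfile PH PL phH phL alphaF alphaU n)
    linarith
  · have h1 : Tendsto (fun n : ℕ => 1 - fidelity PH PL phH phL
        (sincereProfile PH PL phH phL alphaF alphaU n)) atTop (nhds 0) := by
      have := (tendsto_const_nhds (x := (1:ℝ)) (f := (atTop : Filter ℕ))).sub hfid
      simpa using this
    have := h1.const_mul 2
    simpa using this
  · rintro ⟨D, σ', hag, hweak, i₀, hi₀, hgain₀⟩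
    rcases Nat.eq_zero_or_pos n with hn0 | hn
    · subst hn0; exact i₀.elim0
    have hgain : util PH PL phH phL alphaF alphaU (sincereProfile PH PL phH phL alphaF alphaU n) i₀
        + 2 * (1 - fidelity PH PL phH phL (sincereProfile PH PL phH phL alphaF alphaU n))
        < util PH PL phH phL alphaF alphaU σ' i₀ := hgain₀
    have hδ := fid_le_one hPH hPL hPsum hphL0 hph hphH1
      (sincereProfile PH PL phH phL alphaF alphaU n)
    have bT0 := prAwins_nonneg hphL0 hph hphH1 (sincereProfile PH PL phH phL alphaF alphaU n) true
    have bT1 := prAwins_le_one hphL0 hph hphH1 (sincereProfile PH PL phH phL alphaF alphaU n) true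
    have bF0 := prAwins_nonneg hphL0 hph hphH1 (sincereProfile PH PL phH phL alphaF alphaU n) false
    have bF1 := prAwins_le_one hphL0 hph hphH1 (sincereProfile PH PL phH phL alphaF alphaU n) false
    have cT0 := prAwins_nonneg hphL0 hph hphH1 σ' true
    have cT1 := prAwins_le_one hphL0 hph hphH1 σ' true
    have cF0 := prAwins_nonneg hphL0 hph hphH1 σ' false
    have cF1 := prAwins_le_one hphL0 hph hphH1 σ' false
    have hfs : fidelity PH PL phH phL (sincereProfile PH PL phH phL alphaF alphaU n)
        = PL * (1 - prAwins phH phL (sincereProfile PH PL phH phL alphaF alphaU n) false)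
          + PH * prAwins phH phL (sincereProfile PH PL phH phL alphaF alphaU n) true := rfl
    have hfs' : fidelity PH PL phH phL σ'
        = PL * (1 - prAwins phH phL σ' false) + PH * prAwins phH phL σ' true := rfl
    have q1 : PH * prAwins phH phL σ' true ≤ PH := mul_le_of_le_one_right hPH.le cT1
    have q2 : 0 ≤ PL * prAwins phH phL σ' false := mul_nonneg hPL.le cF0
    have q3 : 0 ≤ PL * prAwins phH phL (sincereProfile PH PL phH phL alphaF alphaU n) false :=
      mul_nonneg hPL.le bF0
    have q4 : PH * prAwins phH phL (sincereProfile PH PL phH phL alphaF alphaU n) true ≤ PH :=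
      mul_le_of_le_one_right hPH.le bT1
    have q5 : PL * prAwins phH phL (sincereProfile PH PL phH phL alphaF alphaU n) false ≤ PL :=
      mul_le_of_le_one_right hPL.le bF1
    by_cases hC : ∃ c ∈ D, numF alphaF n + numU alphaU n ≤ (c : ℕ)
    · obtain ⟨c, hcD, hc⟩ := hC
      have hc1 : ¬ (c : ℕ) < numF alphaF n := by omega
      have hc2 : ¬ (c : ℕ) < numF alphaF n + numU alphaU n := by omega
      have hut : util PH PL phH phL alphaF alphaU (sincereProfile PH PL phH phL alphaF alphaU n) c
          = fidelity PH PL phH phL (sincereProfile PH PL phH phL alphaF alphaU n) := by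
        unfold util; rw [if_neg hc1, if_neg hc2]
      have hut' : util PH PL phH phL alphaF alphaU σ' c = fidelity PH PL phH phL σ' := by
        unfold util; rw [if_neg hc1, if_neg hc2]
      have hfle : fidelity PH PL phH phL (sincereProfile PH PL phH phL alphaF alphaU n)
          ≤ fidelity PH PL phH phL σ' := by
        have := hweak c hcD; rwa [hut, hut'] at this
      have hfle1 : fidelity PH PL phH phL σ' ≤ 1 :=
        fid_le_one hPH hPL hPsum hphL0 hph hphH1 σ'
      rcases lt_or_ge ((i₀ : ℕ)) (numF alphaF n) with h1 | h1
      · have e0 : util PH PL phH phL alphaF alphaU (sincereProfile PH PL phH phL alphaF alphaU n) i₀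
            = PH * prAwins phH phL (sincereProfile PH PL phH phL alphaF alphaU n) true
              + PL * prAwins phH phL (sincereProfile PH PL phH phL alphaF alphaU n) false := by
          unfold util; rw [if_pos h1]
        have e0' : util PH PL phH phL alphaF alphaU σ' i₀
            = PH * prAwins phH phL σ' true + PL * prAwins phH phL σ' false := by
          unfold util; rw [if_pos h1]
        rw [e0, e0', hfs] at hgain
        rw [hfs, hfs'] at hfle
        nlinarith [hgain, hfle, q1, q2, q3, q4]
      · rcases lt_or_ge ((i₀ : ℕ)) (numF alphaF n + numU alphaU n) with h2 | h2
        · have e0 : util PH PL phH phL alphaF alphaU (sincereProfile PH PL phH phL alphaF alphaU n) i₀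
              = PH * (1 - prAwins phH phL (sincereProfile PH PL phH phL alphaF alphaU n) true)
                + PL * (1 - prAwins phH phL (sincereProfile PH PL phH phL alphaF alphaU n) false) := by
            unfold util; rw [if_neg (not_lt.mpr h1), if_pos h2]
          have e0' : util PH PL phH phL alphaF alphaU σ' i₀
              = PH * (1 - prAwins phH phL σ' true) + PL * (1 - prAwins phH phL σ' false) := by
            unfold util; rw [if_neg (not_lt.mpr h1), if_pos h2]
          rw [e0, e0', hfs] at hgain
          rw [hfs, hfs'] at hfle
          nlinarith [hgain, hfle, q1, q2, q3, q4, q5]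
        · have e0 : util PH PL phH phL alphaF alphaU (sincereProfile PH PL phH phL alphaF alphaU n) i₀
              = fidelity PH PL phH phL (sincereProfile PH PL phH phL alphaF alphaU n) := by
            unfold util; rw [if_neg (not_lt.mpr (by omega)), if_neg (not_lt.mpr h2)]
          have e0' : util PH PL phH phL alphaF alphaU σ' i₀ = fidelity PH PL phH phL σ' := by
            unfold util; rw [if_neg (not_lt.mpr (by omega)), if_neg (not_lt.mpr h2)]
          rw [e0, e0'] at hgain
          linarith
    · push_neg at hC
      by_cases hFex : ∃ f ∈ D, (f : ℕ) < numF alphaF n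
      · by_cases hUex : ∃ u ∈ D, ¬ (u : ℕ) < numF alphaF n
        · obtain ⟨f, hfD, hf⟩ := hFex
          obtain ⟨u, huD, hu⟩ := hUex
          have hu2 : (u : ℕ) < numF alphaF n + numU alphaU n := hC u huD
          have hsum_util : ∀ τ : TwoRound n,
              util PH PL phH phL alphaF alphaU τ f + util PH PL phH phL alphaF alphaU τ u = 1 := by
            intro τ
            unfold util
            rw [if_pos hf, if_neg hu, if_pos hu2]
            ring_nf
            linarith [hPsum]
          have hwf := hweak f hfD
          have hwu := hweak u huD
          have heqf : util PH PL phH phL alphaF alphaU σ' f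
              = util PH PL phH phL alphaF alphaU (sincereProfile PH PL phH phL alphaF alphaU n) f := by
            have ha := hsum_util (sincereProfile PH PL phH phL alphaF alphaU n)
            have hb := hsum_util σ'
            linarith
          rcases lt_or_ge ((i₀ : ℕ)) (numF alphaF n) with h1 | h1
          · have e1 : util PH PL phH phL alphaF alphaU σ' i₀
                = util PH PL phH phL alphaF alphaU σ' f := by
              unfold util; rw [if_pos h1, if_pos hf]
            have e2 : util PH PL phH phL alphaF alphaU (sincereProfile PH PL phH phL alphaF alphaU n) i₀
                = util PH PL phH phL alphaF alphaU (sincereProfile PH PL phH phL alphaF alphaU n) f := by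
              unfold util; rw [if_pos h1, if_pos hf]
            rw [e1, e2, heqf] at hgain
            linarith
          · have hi2 : (i₀ : ℕ) < numF alphaF n + numU alphaU n := hC i₀ hi₀
            have hequ : util PH PL phH phL alphaF alphaU σ' u
                = util PH PL phH phL alphaF alphaU (sincereProfile PH PL phH phL alphaF alphaU n) u := by
              have ha := hsum_util (sincereProfile PH PL phH phL alphaF alphaU n)
              have hb := hsum_util σ'
              linarith
            have e1 : util PH PL phH phL alphaF alphaU σ' i₀
                = util PH PL phH phL alphaF alphaU σ' u := by
              unfold util; rw [if_neg (not_lt.mpr h1), if_pos hi2, if_neg hu, if_pos hu2]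
            have e2 : util PH PL phH phL alphaF alphaU (sincereProfile PH PL phH phL alphaF alphaU n) i₀
                = util PH PL phH phL alphaF alphaU (sincereProfile PH PL phH phL alphaF alphaU n) u := by
              unfold util; rw [if_neg (not_lt.mpr h1), if_pos hi2, if_neg hu, if_pos hu2]
            rw [e1, e2, hequ] at hgain
            linarith
        · push_neg at hUex
          have hmT := friendly_deviation PH PL phH phL alphaF alphaU hPH hPL hphL0 hph hphH1
            halphaF0 halphaF halphaU0 halphaU halphaC hn σ' D hUex hag true
          have hmF := friendly_deviation PH PL phH phL alphaF alphaU hPH hPL hphL0 hph hphH1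
            halphaF0 halphaF halphaU0 halphaU halphaC hn σ' D hUex hag false
          have hif : (i₀ : ℕ) < numF alphaF n := hUex i₀ hi₀
          have e0 : util PH PL phH phL alphaF alphaU (sincereProfile PH PL phH phL alphaF alphaU n) i₀
              = PH * prAwins phH phL (sincereProfile PH PL phH phL alphaF alphaU n) true
                + PL * prAwins phH phL (sincereProfile PH PL phH phL alphaF alphaU n) false := by
            unfold util; rw [if_pos hif]
          have e0' : util PH PL phH phL alphaF alphaU σ' i₀
              = PH * prAwins phH phL σ' true + PL * prAwins phH phL σ' false := by
            unfold util; rw [if_pos hif]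
          rw [e0, e0'] at hgain
          have w1 : PH * prAwins phH phL σ' true
              ≤ PH * prAwins phH phL (sincereProfile PH PL phH phL alphaF alphaU n) true :=
            mul_le_mul_of_nonneg_left hmT hPH.le
          have w2 : PL * prAwins phH phL σ' false
              ≤ PL * prAwins phH phL (sincereProfile PH PL phH phL alphaF alphaU n) false :=
            mul_le_mul_of_nonneg_left hmF hPL.le
          linarith
      · push_neg at hFex
        have hD' : ∀ i ∈ D, ¬ (i : ℕ) < numF alphaF n ∧
            (i : ℕ) < numF alphaF n + numU alphaU n :=
          fun i hi => ⟨not_lt.mpr (hFex i hi), hC i hi⟩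
        have hmT := unfriendly_deviation PH PL phH phL alphaF alphaU hPH hPL hphL0 hph hphH1
          halphaF0 halphaF halphaU0 halphaU halphaC hn σ' D hD' hag true
        have hmF := unfriendly_deviation PH PL phH phL alphaF alphaU hPH hPL hphL0 hph hphH1
          halphaF0 halphaF halphaU0 halphaU halphaC hn σ' D hD' hag false
        have hif1 : ¬ (i₀ : ℕ) < numF alphaF n := not_lt.mpr (hFex i₀ hi₀)
        have hif2 : (i₀ : ℕ) < numF alphaF n + numU alphaU n := hC i₀ hi₀
        have e0 : util PH PL phH phL alphaF alphaU (sincereProfile PH PL phH phL alphaF alphaU n) i₀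
            = PH * (1 - prAwins phH phL (sincereProfile PH PL phH phL alphaF alphaU n) true)
              + PL * (1 - prAwins phH phL (sincereProfile PH PL phH phL alphaF alphaU n) false) := by
          unfold util; rw [if_neg hif1, if_pos hif2]
        have e0' : util PH PL phH phL alphaF alphaU σ' i₀
            = PH * (1 - prAwins phH phL σ' true) + PL * (1 - prAwins phH phL σ' false) := by
          unfold util; rw [if_neg hif1, if_pos hif2]
        rw [e0, e0'] at hgain
        have w1 : PH * (1 - prAwins phH phL σ' true)
            ≤ PH * (1 - prAwins phH phL (sincereProfile PH PL phH phL alphaF alphaU n) true) :=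
          mul_le_mul_of_nonneg_left (by linarith) hPH.le
        have w2 : PL * (1 - prAwins phH phL σ' false)
            ≤ PL * (1 - prAwins phH phL (sincereProfile PH PL phH phL alphaF alphaU n) false) :=
          mul_le_mul_of_nonneg_left (by linarith) hPL.le
        linarith

end TwoRoundVoting
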